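/- Assume Condition (C) holds with witness X_S for the equation X + A^H f(X)^{-1} A = Q, and consider the alternating sequences (A_h^(k), B_h^(k), Q_h^(k)) and (A^(k), B^(k), Q^(k)). Then all these sequences are well defined and for every k ≥ 1: B_h^(k) ≤ B_h^(k+1) < f(X_S); the interlacing property f(B_h^(k)) ≤ B^(k) ≤ f(B_h^(k+1)) holds; and Q_h^(k+1) ≤ Q^(k) ≤ Q_h^(k) in the Loewner order. -/

import Mathlib

open Matrix Filter Topology
open scoped ComplexOrder

noncomputable section

/-- Square complex matrices of size `n`. -/
abbrev Mat (n : ℕ) := Matrix (Fin n) (Fin n) ℂ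

/-- An operator `f` on complex `n × n` matrices is *admissible* if it satisfies
(a1) `f (f X) = X`, (a2) additivity, (a3) multiplicativity, and
(a4) `f X` is positive semidefinite whenever `X` is. -/
def Admissible {n : ℕ} (f : Mat n → Mat n) : Prop :=
  (∀ X, f (f X) = X) ∧
  (∀ X Y, f (X + Y) = f X + f Y) ∧
  (∀ X Y, f (X * Y) = f X * f Y) ∧
  (∀ X, X.PosSemidef → (f X).PosSemidef)

/-- One step of the alternating iteration producing `(A⁽ᵏ⁾, B⁽ᵏ⁾, Q⁽ᵏ⁾)` from
`(A_h⁽ᵏ⁾, B_h⁽ᵏ⁾, Q_h⁽ᵏ⁾)` (plus-sign equation). -/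
def altStepS {n : ℕ} (f : Mat n → Mat n) (A Q : Mat n) (h : Mat n × Mat n × Mat n) :
    Mat n × Mat n × Mat n :=
  (f A * (f Q - h.2.1)⁻¹ * h.1,
   f A * (f Q - h.2.1)⁻¹ * (f A)ᴴ,
   h.2.2 - h.1ᴴ * (f Q - h.2.1)⁻¹ * h.1)

/-- One step of the alternating iteration producing `(A_h⁽ᵏ⁺¹⁾, B_h⁽ᵏ⁺¹⁾, Q_h⁽ᵏ⁺¹⁾)`
from `(A⁽ᵏ⁾, B⁽ᵏ⁾, Q⁽ᵏ⁾)` (plus-sign equation). -/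
def altStepH {n : ℕ} (A Q : Mat n) (s : Mat n × Mat n × Mat n) : Mat n × Mat n × Mat n :=
  (A * (Q - s.2.1)⁻¹ * s.1,
   A * (Q - s.2.1)⁻¹ * Aᴴ,
   s.2.2 - s.1ᴴ * (Q - s.2.1)⁻¹ * s.1)

/-- The half-index alternating sequence: `altH f A Q k` is the paper's
`(A_{1/2}^{(k+1)}, B_{1/2}^{(k+1)}, Q_{1/2}^{(k+1)})`, starting from `(A, 0, Q)`. -/
def altH {n : ℕ} (f : Mat n → Mat n) (A Q : Mat n) : ℕ → Mat n × Mat n × Mat n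
  | 0 => (A, 0, Q)
  | k + 1 => altStepH A Q (altStepS f A Q (altH f A Q k))

/-- The whole-index alternating sequence: `altS f A Q k` is the paper's
`(A^{(k+1)}, B^{(k+1)}, Q^{(k+1)})` of the alternating iteration. -/
def altS {n : ℕ} (f : Mat n → Mat n) (A Q : Mat n) (k : ℕ) : Mat n × Mat n × Mat n :=
  altStepS f A Q (altH f A Q k)

/-!
An admissible `f` is an involutive ring automorphism of `ℂⁿˣⁿ` preserving positivity. Hence it is
monotone for the Loewner order and commutes with inversion; it also commutes with `ᴴ`, because
`f (i • 1)` is a central square root of `-1`, i.e. `± i • 1`, and the Cartesian decomposition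
`2 X = H + i K` is carried to `2 f X = f H ± i f K` with `f H`, `f K` Hermitian.

Consequently both `B`-sequences are read off the single sequence `v₀ = 0`,
`v_{j+1} = f (A (Q - v_j)⁻¹ Aᴴ)`: `B_h = f v_{2k}` and `B = v_{2k+1}`. Condition (C) and a Schur
complement argument give `v_j < X_S` by induction, and since inversion is antitone, `v` is monotone.
Interlacing is monotonicity of `v`, and the `Q`-inequalities hold because every step subtracts a
term `Mᴴ P⁻¹ M` with `P > 0`.
-/

open scoped MatrixOrder

namespace Matrix

variable {m n 𝕜 : Type*} [Fintype m] [Fintype n] [DecidableEq m] [DecidableEq n] [RCLike 𝕜]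

theorem PosDef.inv_le_inv {S T : Matrix n n 𝕜} (hS : S.PosDef) (hT : T.PosDef) (h : S ≤ T) :
    T⁻¹ ≤ S⁻¹ := by
  have := hT.isUnit.invertible
  have := hS.inv.isUnit.invertible
  have hblock : (fromBlocks T 1 1ᴴ S⁻¹).PosSemidef := by
    rw [PosDef.fromBlocks₂₂ _ _ hS.inv,
      nonsing_inv_nonsing_inv _ ((isUnit_iff_isUnit_det _).1 hS.isUnit)]
    simpa using le_iff.1 h
  exact le_iff.2 (by simpa using (PosDef.fromBlocks₁₁ _ _ hT).1 hblock)

theorem PosDef.sub_mul_inv_mul_conjTranspose {P : Matrix m m 𝕜} {R : Matrix n n 𝕜}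
    {C : Matrix m n 𝕜} (hP : P.PosDef) (hS : (R - Cᴴ * P⁻¹ * C).PosDef) :
    (P - C * R⁻¹ * Cᴴ).PosDef := by
  have hR : R.PosDef := by
    simpa using hS.add_posSemidef (hP.inv.posSemidef.conjTranspose_mul_mul_same C)
  have := hP.isUnit.invertible
  have := hR.isUnit.invertible
  have hblock : (fromBlocks P C Cᴴ R).PosSemidef := (PosDef.fromBlocks₁₁ C R hP).2 hS.posSemidef
  have hdet : (fromBlocks P C Cᴴ R).det = R.det * (P - C * R⁻¹ * Cᴴ).det := by
    rw [det_fromBlocks₂₂, invOf_eq_nonsing_inv]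
  have hdet' : (fromBlocks P C Cᴴ R).det = P.det * (R - Cᴴ * P⁻¹ * C).det := by
    rw [det_fromBlocks₁₁, invOf_eq_nonsing_inv]
  refine ((PosDef.fromBlocks₂₂ P C hR).1 hblock).posDef_iff_isUnit.2 ?_
  rw [isUnit_iff_isUnit_det]
  refine isUnit_of_mul_isUnit_right (x := R.det) ?_
  rw [← hdet, hdet']
  exact (isUnit_iff_isUnit_det _).1 hP.isUnit |>.mul ((isUnit_iff_isUnit_det _).1 hS.isUnit)

end Matrix

theorem add_self_injective {M : Type*} [AddCommGroup M] [Module ℂ M] {X Y : M}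
    (h : X + X = Y + Y) : X = Y :=
  smul_right_injective M (two_ne_zero : (2 : ℂ) ≠ 0) (by simpa only [two_smul] using h)

namespace Admissible

variable {n : ℕ} {f : Mat n → Mat n}

theorem map_map (hf : Admissible f) (X : Mat n) : f (f X) = X := hf.1 X

theorem map_add (hf : Admissible f) (X Y : Mat n) : f (X + Y) = f X + f Y := hf.2.1 X Y

theorem map_mul (hf : Admissible f) (X Y : Mat n) : f (X * Y) = f X * f Y := hf.2.2.1 X Y

theorem map_one (hf : Admissible f) : f 1 = 1 := by
  have h : ∀ Y, Y * f 1 = Y := fun Y => by rw [← hf.map_map Y, ← hf.map_mul, mul_one]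
  simpa only [one_mul] using h 1

def toRingHom (hf : Admissible f) : Mat n →+* Mat n :=
  { AddMonoidHom.mk' f hf.map_add with
    toFun := f
    map_one' := hf.map_one
    map_mul' := hf.map_mul }

theorem map_zero (hf : Admissible f) : f 0 = 0 := _root_.map_zero hf.toRingHom

theorem map_neg (hf : Admissible f) (X : Mat n) : f (-X) = -f X := _root_.map_neg hf.toRingHom X

theorem map_sub (hf : Admissible f) (X Y : Mat n) : f (X - Y) = f X - f Y :=
  _root_.map_sub hf.toRingHom X Y

theorem isUnit_map_iff (hf : Admissible f) {X : Mat n} : IsUnit (f X) ↔ IsUnit X :=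
  ⟨fun h => hf.map_map X ▸ h.map hf.toRingHom, fun h => h.map hf.toRingHom⟩

theorem map_inv (hf : Admissible f) (X : Mat n) : f X⁻¹ = (f X)⁻¹ := by
  by_cases hX : IsUnit X
  · refine (inv_eq_right_inv ?_).symm
    rw [← hf.map_mul, mul_nonsing_inv _ ((isUnit_iff_isUnit_det X).1 hX), hf.map_one]
  · have hfX : ¬IsUnit (f X) := hf.isUnit_map_iff.not.2 hX
    rw [nonsing_inv_apply_not_isUnit _ ((isUnit_iff_isUnit_det X).not.1 hX),
      nonsing_inv_apply_not_isUnit _ ((isUnit_iff_isUnit_det _).not.1 hfX), hf.map_zero]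

theorem map_posSemidef (hf : Admissible f) {X : Mat n} (hX : X.PosSemidef) : (f X).PosSemidef :=
  hf.2.2.2 X hX

theorem monotone (hf : Admissible f) : Monotone f := fun X Y h =>
  le_iff.2 (hf.map_sub Y X ▸ hf.map_posSemidef (le_iff.1 h))

theorem map_posDef (hf : Admissible f) {X : Mat n} (hX : X.PosDef) : (f X).PosDef :=
  (hf.map_posSemidef hX.posSemidef).posDef_iff_isUnit.2 (hf.isUnit_map_iff.2 hX.isUnit)

theorem isHermitian_map (hf : Admissible f) {X : Mat n} (hX : X.IsHermitian) :
    (f X).IsHermitian := by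
  have hsq (Y : Mat n) : (f (Yᴴ * Y)).IsHermitian :=
    (hf.map_posSemidef (posSemidef_conjTranspose_mul_self Y)).isHermitian
  -- `X` is Hermitian, so `2 X` is a difference of matrices of the form `Yᴴ Y`
  have hdouble : f X + f X = f ((X + 1)ᴴ * (X + 1)) - f (Xᴴ * X) - f (1ᴴ * 1) := by
    rw [← hf.map_add, ← hf.map_sub, ← hf.map_sub, conjTranspose_add, hX.eq]
    congr 1
    simp only [conjTranspose_one]
    noncomm_ring
  have h : (f X + f X).IsHermitian := hdouble ▸ ((hsq _).sub (hsq _)).sub (hsq _)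
  exact add_self_injective (by simpa only [IsHermitian, conjTranspose_add] using h.eq)

theorem commute_map_I_smul_one (hf : Admissible f) (M : Mat n) :
    Commute (f (Complex.I • 1)) M := by
  have h : Commute (Complex.I • (1 : Mat n)) (f M) := ((Commute.one_left _).smul_left _)
  have := congrArg f h.eq
  rwa [hf.map_mul, hf.map_mul, hf.map_map] at this

theorem conjTranspose_map_I_smul_one (hf : Admissible f) :
    (f (Complex.I • 1))ᴴ = -f (Complex.I • 1) := by
  obtain ⟨c, -, hc⟩ : f (Complex.I • 1) ∈ scalar (Fin n) '' Set.center ℂ := by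
    rw [← center_eq_scalar_image, Semigroup.mem_center_iff]
    exact fun M => (hf.commute_map_I_smul_one M).eq.symm
  rcases isEmpty_or_nonempty (Fin n) with hn | hn
  · exact Subsingleton.elim _ _
  have hJJ : f (Complex.I • 1) * f (Complex.I • 1) = -1 := by
    rw [← hf.map_mul, smul_mul_smul_comm, Complex.I_mul_I, one_mul, neg_one_smul, hf.map_neg,
      hf.map_one]
  have hcc : c * c = Complex.I * Complex.I := by
    rw [Complex.I_mul_I]
    refine (scalar_inj (n := Fin n)).1 ?_
    rw [_root_.map_mul, hc, hJJ, _root_.map_neg, _root_.map_one]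
  rcases mul_self_eq_mul_self_iff.1 hcc with rfl | rfl <;>
    simp [← hc, scalar_apply, diagonal_conjTranspose]

theorem map_conjTranspose (hf : Admissible f) (X : Mat n) : f Xᴴ = (f X)ᴴ := by
  set J := f (Complex.I • 1)
  set H := X + Xᴴ
  set K := (-Complex.I) • (X - Xᴴ)
  have hH : H.IsHermitian := by simp [H, IsHermitian, add_comm]
  have hK : K.IsHermitian := by
    simp only [K, IsHermitian, conjTranspose_smul, conjTranspose_sub, conjTranspose_conjTranspose]
    rw [← neg_sub, smul_neg, ← neg_smul]
    simp
  have hIK : Complex.I • (1 : Mat n) * K = X - Xᴴ := by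
    rw [smul_mul_assoc, one_mul, smul_smul, mul_neg, Complex.I_mul_I, neg_neg, one_smul]
  have hX : f X + f X = f H + J * f K := by
    rw [← hf.map_add, ← hf.map_mul, hIK, ← hf.map_add]
    congr 1
    simp only [H]
    abel
  have hXH : f Xᴴ + f Xᴴ = f H - J * f K := by
    rw [← hf.map_add, ← hf.map_mul, hIK, ← hf.map_sub]
    congr 1
    simp only [H]
    abel
  refine add_self_injective ?_
  rw [hXH, ← conjTranspose_add, hX, conjTranspose_add, conjTranspose_mul,
    (hf.isHermitian_map hH).eq, (hf.isHermitian_map hK).eq, hf.conjTranspose_map_I_smul_one,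
    mul_neg, (hf.commute_map_I_smul_one _).eq, sub_eq_add_neg]

end Admissible

section Alternating

variable {n : ℕ} {f : Mat n → Mat n} {A Q XS : Mat n}

/-- Interleaving of the two `B`-sequences: `altB f A Q (2 * k) = f B_h` and
`altB f A Q (2 * k + 1) = B` (see `altB_spec`). -/
def altB (f : Mat n → Mat n) (A Q : Mat n) : ℕ → Mat n
  | 0 => 0
  | j + 1 => f (A * (Q - altB f A Q j)⁻¹ * Aᴴ)

theorem altH_succ (k : ℕ) : altH f A Q (k + 1) = altStepH A Q (altS f A Q k) := rfl

theorem altS_B_eq (hf : Admissible f) (k : ℕ) :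
    (altS f A Q k).2.1 = f (A * (Q - f (altH f A Q k).2.1)⁻¹ * Aᴴ) := by
  rw [hf.map_mul, hf.map_mul, hf.map_inv, hf.map_sub, hf.map_map, hf.map_conjTranspose]
  rfl

theorem altB_spec (hf : Admissible f) (k : ℕ) :
    (altH f A Q k).2.1 = f (altB f A Q (2 * k)) ∧ (altS f A Q k).2.1 = altB f A Q (2 * k + 1) := by
  have hS {k : ℕ} (hH : (altH f A Q k).2.1 = f (altB f A Q (2 * k))) :
      (altS f A Q k).2.1 = altB f A Q (2 * k + 1) := by
    rw [altS_B_eq hf, hH, hf.map_map, altB]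
  induction k with
  | zero =>
    have hH : (altH f A Q 0).2.1 = f (altB f A Q 0) := hf.map_zero.symm
    exact ⟨hH, hS hH⟩
  | succ k ih =>
    have hH : (altH f A Q (k + 1)).2.1 = f (altB f A Q (2 * (k + 1))) := by
      rw [altH_succ, altStepH, ih.2]
      exact (hf.map_map _).symm
    exact ⟨hH, hS hH⟩

theorem posDef_sub_sub_of_condition
    (hC : (Q - Aᴴ * (f XS)⁻¹ * A - XS).PosSemidef) {V : Mat n} (hV : (XS - V).PosDef) :
    (Q - V - Aᴴ * (f XS)⁻¹ * A).PosDef := by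
  convert hV.posSemidef_add hC using 1
  abel

theorem posDef_witness_sub_altB (hf : Admissible f) (hXS : XS.PosDef)
    (hC : (Q - Aᴴ * (f XS)⁻¹ * A - XS).PosSemidef) (j : ℕ) : (XS - altB f A Q j).PosDef := by
  induction j with
  | zero => simpa only [altB, sub_zero] using hXS
  | succ j ih =>
    have h := (hf.map_posDef hXS).sub_mul_inv_mul_conjTranspose
      (posDef_sub_sub_of_condition hC ih)
    rw [← hf.map_map XS, altB, ← hf.map_sub]
    exact hf.map_posDef h

theorem posDef_Q_sub_altB (hf : Admissible f) (hXS : XS.PosDef)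
    (hC : (Q - Aᴴ * (f XS)⁻¹ * A - XS).PosSemidef) (j : ℕ) : (Q - altB f A Q j).PosDef := by
  have hY := (hf.map_posDef hXS).inv.posSemidef.conjTranspose_mul_mul_same A
  have h := posDef_sub_sub_of_condition hC (posDef_witness_sub_altB hf hXS hC j)
  simpa only [sub_add_cancel] using h.add_posSemidef hY

theorem altB_monotone (hf : Admissible f) (hXS : XS.PosDef)
    (hC : (Q - Aᴴ * (f XS)⁻¹ * A - XS).PosSemidef) : Monotone (altB f A Q) := by
  have hQ := posDef_Q_sub_altB hf hXS hC
  refine monotone_nat_of_le_succ fun j => ?_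
  induction j with
  | zero =>
    exact nonneg_iff_posSemidef.2
      (hf.map_posSemidef ((hQ 0).inv.posSemidef.mul_mul_conjTranspose_same A))
  | succ j ih =>
    refine hf.monotone (star_right_conjugate_le_conjugate ?_ A)
    exact (hQ (j + 1)).inv_le_inv (hQ j) (sub_le_sub_left ih Q)

end Alternating

theorem stmt_18_general {n : ℕ} (f : Mat n → Mat n) (hf : Admissible f)
    (A Q : Mat n)
    (XS : Mat n) (hXS : XS.PosDef)
    (hXSle : (Q - Aᴴ * (f XS)⁻¹ * A - XS).PosSemidef) :
    (∀ k, IsUnit (f Q - (altH f A Q k).2.1) ∧ IsUnit (Q - (altS f A Q k).2.1)) ∧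
    (∀ k, ((altH f A Q (k + 1)).2.1 - (altH f A Q k).2.1).PosSemidef ∧
      (f XS - (altH f A Q (k + 1)).2.1).PosDef ∧
      ((altS f A Q k).2.1 - f ((altH f A Q k).2.1)).PosSemidef ∧
      (f ((altH f A Q (k + 1)).2.1) - (altS f A Q k).2.1).PosSemidef ∧
      ((altH f A Q k).2.2 - (altS f A Q k).2.2).PosSemidef ∧
      ((altS f A Q k).2.2 - (altH f A Q (k + 1)).2.2).PosSemidef) := by
  have hB := altB_spec (A := A) (Q := Q) hf
  have hmono := altB_monotone hf hXS hXSle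
  have hH k : (f Q - (altH f A Q k).2.1).PosDef := by
    rw [(hB k).1, ← hf.map_sub]
    exact hf.map_posDef (posDef_Q_sub_altB hf hXS hXSle _)
  have hS k : (Q - (altS f A Q k).2.1).PosDef := by
    rw [(hB k).2]
    exact posDef_Q_sub_altB hf hXS hXSle _
  refine ⟨fun k => ⟨(hH k).isUnit, (hS k).isUnit⟩, fun k => ⟨?_, ?_, ?_, ?_, ?_, ?_⟩⟩
  · rw [(hB _).1, (hB _).1]
    exact hf.monotone (hmono (by omega))
  · rw [(hB _).1, ← hf.map_sub]
    exact hf.map_posDef (posDef_witness_sub_altB hf hXS hXSle _)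
  · rw [(hB k).2, (hB k).1, hf.map_map]
    exact hmono (by omega)
  · rw [(hB _).1, hf.map_map, (hB k).2]
    exact hmono (by omega)
  · simpa only [altS, altStepS, sub_sub_cancel] using
      (hH k).inv.posSemidef.conjTranspose_mul_mul_same (altH f A Q k).1
  · simpa only [altH_succ, altStepH, sub_sub_cancel] using
      (hS k).inv.posSemidef.conjTranspose_mul_mul_same (altS f A Q k).1

/-- monotonicity and interlacing of the alternating sequences under
Condition (C) with witness `X_S` (indices shifted by one with respect to the paper). -/
theorem stmt_18 {n : ℕ} (f : Mat n → Mat n) (hf : Admissible f)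
    (A Q : Mat n) (hQ : Q.PosDef)
    (XS : Mat n) (hXS : XS.PosDef)
    (hXSle : (Q - Aᴴ * (f XS)⁻¹ * A - XS).PosSemidef) :
    (∀ k, IsUnit (f Q - (altH f A Q k).2.1) ∧ IsUnit (Q - (altS f A Q k).2.1)) ∧
    (∀ k, ((altH f A Q (k + 1)).2.1 - (altH f A Q k).2.1).PosSemidef ∧
      (f XS - (altH f A Q (k + 1)).2.1).PosDef ∧
      ((altS f A Q k).2.1 - f ((altH f A Q k).2.1)).PosSemidef ∧
      (f ((altH f A Q (k + 1)).2.1) - (altS f A Q k).2.1).PosSemidef ∧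
      ((altH f A Q k).2.2 - (altS f A Q k).2.2).PosSemidef ∧
      ((altS f A Q k).2.2 - (altH f A Q (k + 1)).2.2).PosSemidef) :=
  stmt_18_general f hf A Q XS hXS hXSle
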